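/- arXiv:math/0010025 — 4 statements merged into one kernel-verified Lean document; each statement's English description precedes it below -/
import Mathlib

section
/- Let P ⊂ ℝ^ℱ_{≥0} be the image of a simple n-polytope under the distance embedding, V_P ⊂ ℝ^ℱ its direction subspace, and V_P^⊥ the orthogonal complement. Then for every p ∈ P and every nonzero a ∈ V_P^⊥, the coordinatewise-exponential orbit exp(V_P^⊥) * p = {(exp(a_F) p_F)_{F∈ℱ} : a ∈ V_P^⊥} meets P only at p: i.e. for p, q ∈ P and a ∈ V_P^⊥, if exp(a) * p = q coordinatewise, then a = 0 and p = q. -/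
variable {n : ℕ} {ι : Type*} [Fintype ι]

/-- The direction subspace `V_P = A_P(ℝⁿ) ⊂ ℝ^ℱ`, i.e. the span of the columns of
the defining matrix `A_P`. -/
def dirSpace (A : ι → (Fin n → ℝ)) : Submodule ℝ (EuclideanSpace ℝ ι) :=
  Submodule.span ℝ (Set.range fun r : Fin n => (WithLp.toLp 2 (fun i => A i r) : EuclideanSpace ℝ ι))

/-!
Write `d x := A x - b ≥ 0` for the facet distances. If `d q = exp(a) * d p` with `a ⊥ V_P`,
then `d q - d p = A (q - p) ∈ V_P`, so `0 = ∑ a_F (d q - d p)_F = ∑ a_F (exp a_F - 1) d_F(p)`.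
Every term is nonnegative, so `a` is supported on the facets through `p`; there `a ⊥ V_P` is a
linear relation `∑ a_F A_F = 0` among the facet normals at `p`, which are linearly independent
because `P` is simple. Hence `a = 0`, so `A p = A q`, and `p = q` since `A` is injective.
-/
open Finset Real

theorem Real.mul_exp_sub_one_pos {x : ℝ} (hx : x ≠ 0) : 0 < x * (exp x - 1) := by
  rcases hx.lt_or_gt with h | h
  · exact mul_pos_of_neg_of_neg h (sub_neg.2 (exp_lt_one_iff.2 h))
  · exact mul_pos h (sub_pos.2 (one_lt_exp_iff.2 h))

theorem Real.mul_exp_sub_one_nonneg (x : ℝ) : 0 ≤ x * (exp x - 1) := by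
  rcases eq_or_ne x 0 with rfl | hx
  · simp
  · exact (mul_exp_sub_one_pos hx).le

theorem eq_zero_of_exp_mul_of_sum_mul_sub_eq_zero {a d d' : ι → ℝ}
    (hd : ∀ i, 0 ≤ d i) (hd' : ∀ i, d' i = exp (a i) * d i)
    (h : ∑ i, a i * (d' i - d i) = 0) {i : ι} (hi : a i ≠ 0) : d i = 0 := by
  have hterm : ∀ j, a j * (d' j - d j) = a j * (exp (a j) - 1) * d j := fun j => by
    rw [hd']; ring
  simp_rw [hterm] at h
  have hzero := (Fintype.sum_eq_zero_iff_of_nonneg fun j =>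
    mul_nonneg (mul_exp_sub_one_nonneg (a j)) (hd j)).1 h
  exact (mul_eq_zero.1 (congrFun hzero i)).resolve_left (mul_exp_sub_one_pos hi).ne'

theorem LinearIndependent.eq_zero_of_sum_smul_eq_zero_of_support {R M : Type*} [Ring R]
    [AddCommGroup M] [Module R M] {v : ι → M} {s : ι → Prop}
    (hv : LinearIndependent R fun i : {i // s i} => v i) {c : ι → R}
    (hc : ∀ i, c i ≠ 0 → s i) (h : ∑ i, c i • v i = 0) (i : ι) : c i = 0 := by
  classical
  have hsub : ∑ j : {j // s j}, c j • v j = 0 := by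
    rw [← h, ← Fintype.sum_subtype_add_sum_subtype s, left_eq_add]
    refine Fintype.sum_eq_zero _ fun j => ?_
    rw [not_imp_comm.1 (hc j) j.2, zero_smul]
  by_contra hi
  exact hi (Fintype.linearIndependent_iff.1 hv (fun j => c j) hsub ⟨i, hc i hi⟩)

section dirSpace

variable {A : ι → Fin n → ℝ} {a : EuclideanSpace ℝ ι}

theorem sum_mul_eq_zero_of_mem_orthogonal_dirSpace (ha : a ∈ (dirSpace A)ᗮ) (r : Fin n) :
    ∑ i, a i * A i r = 0 := by
  have hr := (Submodule.mem_orthogonal _ a).1 ha _ (Submodule.subset_span ⟨r, rfl⟩)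
  simpa [PiLp.inner_apply, mul_comm] using hr

theorem sum_mul_sum_mul_eq_zero_of_mem_orthogonal_dirSpace (ha : a ∈ (dirSpace A)ᗮ)
    (x : Fin n → ℝ) : ∑ i, a i * ∑ r, A i r * x r = 0 := by
  simp_rw [mul_sum, ← mul_assoc]
  rw [sum_comm]
  simp_rw [← sum_mul, sum_mul_eq_zero_of_mem_orthogonal_dirSpace ha, zero_mul, sum_const_zero]

end dirSpace

theorem exp_orbit_meets_polytope_once_general
    (A : ι → (Fin n → ℝ)) (b : ι → ℝ)
    (Q : Set (Fin n → ℝ))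
    (hQ : Q = {x | ∀ i, b i ≤ ∑ r, A i r * x r})
    (hrank : Function.Injective
      (fun x : Fin n → ℝ => (fun i => ∑ r, A i r * x r : ι → ℝ)))
    (hsimple : ∀ x ∈ Q,
      LinearIndependent ℝ (fun i : {i : ι // ∑ r, A i r * x r = b i} => A i.1))
    (p : Fin n → ℝ) (hp : p ∈ Q) (q : Fin n → ℝ)
    (a : EuclideanSpace ℝ ι) (ha : a ∈ (dirSpace A)ᗮ)
    (horbit : ∀ i,
      (∑ r, A i r * q r) - b i = Real.exp (a i) * ((∑ r, A i r * p r) - b i)) :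
    a = 0 ∧ p = q := by
  have hdp : ∀ i, 0 ≤ (∑ r, A i r * p r) - b i := fun i => sub_nonneg.2 ((hQ ▸ hp : _) i)
  have hincr : ∑ i, a i * (((∑ r, A i r * q r) - b i) - ((∑ r, A i r * p r) - b i)) = 0 := by
    simpa [mul_sub, sum_sub_distrib] using
      sum_mul_sum_mul_eq_zero_of_mem_orthogonal_dirSpace ha (q - p)
  have hactive : ∀ i, a i ≠ 0 → ∑ r, A i r * p r = b i := fun i hi =>
    sub_eq_zero.1 (eq_zero_of_exp_mul_of_sum_mul_sub_eq_zero hdp horbit hincr hi)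
  have hrel : ∑ i, a i • A i = 0 := funext fun r => by
    simpa using sum_mul_eq_zero_of_mem_orthogonal_dirSpace ha r
  have ha0 : a = 0 := by
    ext i
    exact (hsimple p hp).eq_zero_of_sum_smul_eq_zero_of_support hactive hrel i
  refine ⟨ha0, hrank (funext fun i => ?_)⟩
  simpa [ha0] using (horbit i).symm

/-- For a simple polytope `P` (embedded in `ℝ^ℱ_{≥0}` via the facet-distance map
`d p = A_P p − b`), the coordinatewise-exponential orbit of the image of a point
`p` under `exp(V_P^⊥)` meets the image of `P` only at `p`: if `p, q ∈ P` and
`a ∈ V_P^⊥` satisfy `d q = exp(a) * d p` coordinatewise, then `a = 0` and `p = q`. -/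
theorem exp_orbit_meets_polytope_once
    (A : ι → (Fin n → ℝ)) (b : ι → ℝ)
    (Q : Set (Fin n → ℝ))
    (hQ : Q = {x | ∀ i, b i ≤ ∑ r, A i r * x r})
    (hrank : Function.Injective
      (fun x : Fin n → ℝ => (fun i => ∑ r, A i r * x r : ι → ℝ)))
    (hsimple : ∀ x ∈ Q,
      LinearIndependent ℝ (fun i : {i : ι // ∑ r, A i r * x r = b i} => A i.1))
    (p : Fin n → ℝ) (hp : p ∈ Q) (q : Fin n → ℝ) (hq : q ∈ Q)
    (a : EuclideanSpace ℝ ι) (ha : a ∈ (dirSpace A)ᗮ)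
    (horbit : ∀ i,
      (∑ r, A i r * q r) - b i = Real.exp (a i) * ((∑ r, A i r * p r) - b i)) :
    a = 0 ∧ p = q :=
  exp_orbit_meets_polytope_once_general A b Q hQ hrank hsimple p hp q a ha horbit
end

section
/- The map (p, a) ↦ exp(a) * p (coordinatewise multiplication) defines a homeomorphism from P × V_P^⊥ onto the subspace W^ℝ(P) = {f: ℱ → ℝ_{≥0} : f⁻¹(0) = ℱ_G for some face G of P} of ℝ^ℱ_{≥0}, where P is embedded in ℝ^ℱ_{≥0} via facet-distances. -/
/-!
Write `d(p) = A p - b`. For `p, p' ∈ P` and `a, a' ∈ V_Pᗮ` the vector `a' - a` is orthogonal to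
`d(p') - d(p) ∈ V_P`, so summing the pointwise inequality
`(√y - √q)² + c (q - y) ≤ y log (y / (e^c q)) - y + e^c q` over the facets bounds the Hellinger
distance between `d(p')` and `d(p)` by the divergence of `exp (a' - a) * d(p')` from `d(p)`. Hence
`exp a' * d(p') → exp a * d(p)` forces `d(p') → d(p)`, i.e. `p' → p`, and `a'_i → a_i` on the facets
not containing `p`; by simplicity at `p` these coordinates determine a point of `V_Pᗮ`. This gives
injectivity and continuity of the inverse at once.

Surjectivity is Birch's theorem: if `f ∈ W^ℝ(P)` has the zero set of `d(x)`, the convex function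
`a ↦ ∑ f_i e^{-a_i} + d_i(x) a_i` is coercive on `V_Pᗮ` (simplicity at `x` again), and at its
minimum `a` the first-order condition says `e^{-a} f - d(x) ∈ V_P`, i.e. `e^{-a} f = d(p)` with
`p ∈ P`.
-/

variable {n : ℕ} {ι : Type*} [Fintype ι]

/-- `W^ℝ(P)`: the space of nonnegative functions on the facet set whose zero set is
the set of facets containing some face of `P`, i.e. the set of facets active at
some point `x` of the polytope. -/
def WR (A : ι → (Fin n → ℝ)) (b : ι → ℝ) (Q : Set (Fin n → ℝ)) :
    Set (EuclideanSpace ℝ ι) :=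
  {f | (∀ i, 0 ≤ f i) ∧ ∃ x ∈ Q, ∀ i, (f i = 0 ↔ ∑ r, A i r * x r = b i)}

open Real Filter Topology Matrix

lemma sq_sqrt_sub_sqrt_add_mul_sub_le {y q c : ℝ} (hy : 0 ≤ y) (hq : 0 ≤ q)
    (hyq : y = 0 ∨ 0 < q) :
    (√y - √q) ^ 2 + c * (q - y) ≤ y * log (y / (exp c * q)) - y + exp c * q := by
  have hexp : q * (c + 1) ≤ exp c * q := by nlinarith [add_one_le_exp c]
  rcases hy.eq_or_lt with rfl | hy
  · simp only [sqrt_zero, zero_sub, neg_sq, sq_sqrt hq, zero_mul, sub_zero]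
    linarith
  obtain ⟨s, hs, rfl⟩ : ∃ s, 0 < s ∧ s ^ 2 = y := ⟨√y, sqrt_pos.2 hy, sq_sqrt hy.le⟩
  obtain ⟨t, ht, rfl⟩ : ∃ t, 0 < t ∧ t ^ 2 = q :=
    ⟨√q, sqrt_pos.2 (hyq.resolve_left hy.ne'), sq_sqrt hq⟩
  -- the Hellinger bound `2 s (s - t) ≤ s² log (s² / t²)`
  have hlog : s * (log t - log s) ≤ t - s := by
    have := log_le_sub_one_of_pos (div_pos ht hs)
    rw [log_div ht.ne' hs.ne'] at this
    have h := mul_le_mul_of_nonneg_left this hs.le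
    have hst : s * (t / s - 1) = t - s := by field_simp
    linarith
  rw [sqrt_sq hs.le, sqrt_sq ht.le, log_div (by positivity) (by positivity),
    log_mul (exp_pos c).ne' (by positivity), log_exp, log_pow, log_pow]
  push_cast
  nlinarith

lemma continuousAt_mul_log_div_sub_add (y : ℝ) :
    ContinuousAt (fun u => y * log (y / u) - y + u) y := by
  rcases eq_or_ne y 0 with rfl | hy
  · simpa using continuousAt_id' (0 : ℝ)
  · exact ((continuousAt_const.mul ((continuousAt_const.div continuousAt_id hy).log
      (by simpa using hy))).sub continuousAt_const).add continuousAt_id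

theorem sum_sq_sqrt_sub_sqrt_le {y q c : ι → ℝ} (hy : 0 ≤ y) (hq : 0 ≤ q)
    (hyq : ∀ i, y i = 0 ∨ 0 < q i) (horth : ∑ i, c i * (q i - y i) = 0) :
    ∑ i, (√(y i) - √(q i)) ^ 2 ≤
      ∑ i, (y i * log (y i / (exp (c i) * q i)) - y i + exp (c i) * q i) :=
  calc ∑ i, (√(y i) - √(q i)) ^ 2
      = ∑ i, ((√(y i) - √(q i)) ^ 2 + c i * (q i - y i)) := by
        rw [Finset.sum_add_distrib, horth, add_zero]
    _ ≤ _ := Finset.sum_le_sum fun i _ => sq_sqrt_sub_sqrt_add_mul_sub_le (hy i) (hq i) (hyq i)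

theorem tendsto_of_tendsto_exp_mul {α : Type*} {l : Filter α} {y : ι → ℝ}
    {q c : α → ι → ℝ}
    (hy : 0 ≤ y) (hq : ∀ k, 0 ≤ q k) (horth : ∀ k, ∑ i, c k i * (q k i - y i) = 0)
    (h : ∀ i, Tendsto (fun k => exp (c k i) * q k i) l (𝓝 (y i))) (i : ι) :
    Tendsto (fun k => q k i) l (𝓝 (y i)) := by
  have hsupp : ∀ᶠ k in l, ∀ j, y j = 0 ∨ 0 < q k j := by
    refine eventually_all.2 fun j => ?_
    rcases (hy j).eq_or_lt with hj | hj
    · exact .of_forall fun _ => .inl hj.symm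
    · filter_upwards [(h j).eventually (lt_mem_nhds hj)] with k hk
      exact .inr (pos_of_mul_pos_right hk (exp_pos _).le)
  have hkl : Tendsto (fun k => ∑ j, (y j * log (y j / (exp (c k j) * q k j)) - y j
      + exp (c k j) * q k j)) l (𝓝 0) := by
    have := tendsto_finsetSum Finset.univ fun j _ =>
      (continuousAt_mul_log_div_sub_add (y j)).tendsto.comp (h j)
    simpa using this
  have hsq : Tendsto (fun k => (√(y i) - √(q k i)) ^ 2) l (𝓝 0) := by
    refine tendsto_of_tendsto_of_tendsto_of_le_of_le' tendsto_const_nhds hkl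
      (.of_forall fun _ => sq_nonneg _) ?_
    filter_upwards [hsupp] with k hk
    exact (Finset.single_le_sum (fun j _ => sq_nonneg (√(y j) - √(q k j)))
      (Finset.mem_univ i)).trans (sum_sq_sqrt_sub_sqrt_le hy (hq k) hk (horth k))
  have hsqrt : Tendsto (fun k => √(q k i)) l (𝓝 √(y i)) := by
    rw [tendsto_iff_norm_sub_tendsto_zero]
    simpa [Function.comp_def, sqrt_sq_eq_abs, abs_sub_comm] using
      (continuous_sqrt.tendsto 0).comp hsq
  simpa [sq_sqrt (hy i), sq_sqrt (hq _ i)] using hsqrt.pow 2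

lemma tendsto_cocompact_mul_exp_neg_add_mul {f d : ℝ} (hf : 0 < f) (hd : 0 < d) :
    Tendsto (fun t => f * exp (-t) + d * t) (cocompact ℝ) atTop := by
  rw [cocompact_eq_atBot_atTop, tendsto_sup]
  constructor
  · -- tangent line of `exp` at `log (2 d / f)`: `f e^{-t} ≥ 2 d (1 - t - log (2 d / f))`
    set K := 2 * d / f
    have hK : 0 < K := by positivity
    refine tendsto_atTop_mono (fun t => ?_) (tendsto_atTop_add_const_right _
      (2 * d * (1 - log K)) (tendsto_neg_atBot_atTop.const_mul_atTop hd))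
    have h := add_one_le_exp (-t - log K)
    rw [exp_sub, exp_log hK, le_div_iff₀ hK] at h
    have hfK : f * ((-t - log K + 1) * K) = 2 * d * (-t - log K + 1) := by
      simp only [K]; field_simp
    nlinarith [mul_le_mul_of_nonneg_left h hf.le]
  · exact tendsto_atTop_add_left_of_le' _ 0 (.of_forall fun t => by positivity)
      (tendsto_id.const_mul_atTop hd)

lemma tendsto_cocompact_sum_apply {S : Type*} [Fintype S] {g : S → ℝ → ℝ}
    (hc : ∀ i, Continuous (g i)) (hg : ∀ i, Tendsto (g i) (cocompact ℝ) atTop) :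
    Tendsto (fun v : S → ℝ => ∑ i, g i (v i)) (cocompact (S → ℝ)) atTop := by
  choose m hm using fun j => (hc j).exists_forall_le (hg j)
  rw [← coprodᵢ_cocompact, Filter.coprodᵢ, tendsto_iSup]
  intro i
  refine tendsto_atTop_mono (fun v => ?_) (tendsto_atTop_add_const_right _
    (∑ j, g j (m j) - g i (m i)) ((hg i).comp tendsto_comap))
  have := Finset.single_le_sum (fun j _ => sub_nonneg.2 (hm j (v j))) (Finset.mem_univ i)
  rw [Finset.sum_sub_distrib] at this
  simp only [Function.comp_apply]
  linarith

lemma hasDerivAt_mul_exp_neg_add_mul (f y a c : ℝ) :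
    HasDerivAt (fun t => f * exp (-(a + t * c)) + y * (a + t * c))
      (c * (y - f * exp (-a))) 0 := by
  have h : HasDerivAt (fun t => a + t * c) c 0 := by
    simpa using ((hasDerivAt_id (0 : ℝ)).mul_const c).const_add a
  refine (((h.fun_neg.exp).const_mul f).fun_add (h.const_mul y)).congr_deriv ?_
  simp only [zero_mul, add_zero]
  ring

noncomputable def restrictCoords (W : Submodule ℝ (EuclideanSpace ℝ ι)) (s : Set ι) :
    W →ₗ[ℝ] (s → ℝ) :=
  LinearMap.pi fun i => (EuclideanSpace.proj (i : ι)).toLinearMap ∘ₗ W.subtype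

lemma isClosedEmbedding_restrictCoords {W : Submodule ℝ (EuclideanSpace ℝ ι)} {s : Set ι}
    (hW : ∀ a ∈ W, (∀ i ∈ s, a i = 0) → a = 0) :
    Topology.IsClosedEmbedding (restrictCoords W s) := by
  refine LinearMap.isClosedEmbedding_of_injective (LinearMap.ker_eq_bot'.2 fun a ha => ?_)
  exact Subtype.ext <| hW a a.2 fun i hi => congr_fun ha ⟨i, hi⟩

theorem exists_mem_forall_sum_mul_exp_neg_sub_eq_zero (W : Submodule ℝ (EuclideanSpace ℝ ι))
    {f y : ι → ℝ} (hf : 0 ≤ f) (hy : 0 ≤ y) (hfy : ∀ i, f i = 0 ↔ y i = 0)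
    (hW : ∀ a ∈ W, (∀ i, y i ≠ 0 → a i = 0) → a = 0) :
    ∃ a ∈ W, ∀ c ∈ W, ∑ i, c i * (f i * exp (-a i) - y i) = 0 := by
  classical
  set s : Set ι := {i | y i ≠ 0}
  let G : W → ℝ := fun a => ∑ i, (f i * exp (-a.1 i) + y i * a.1 i)
  have hG : G = (fun v : s → ℝ => ∑ i : s, (f i * exp (-v i) + y i * v i)) ∘
      restrictCoords W s := by
    funext a
    simp only [G, Function.comp_apply, ← Fintype.sum_subtype_add_sum_subtype (· ∈ s)]
    refine add_eq_left.2 (Finset.sum_eq_zero fun i _ => ?_)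
    have hyi : y i = 0 := not_not.1 i.2
    simp [hyi, (hfy i).2 hyi]
  have hlim : Tendsto G (cocompact W) atTop := by
    rw [hG]
    refine (tendsto_cocompact_sum_apply (g := fun (i : s) t => f i * exp (-t) + y i * t)
      (fun i => by fun_prop) fun i => ?_).comp
      (isClosedEmbedding_restrictCoords hW).tendsto_cocompact
    have hyi : 0 < y i := (hy i).lt_of_ne' i.2
    exact tendsto_cocompact_mul_exp_neg_add_mul
      ((hf i).lt_of_ne' fun h => i.2 ((hfy i).1 h)) hyi
  obtain ⟨⟨a, haW⟩, ha⟩ := (by fun_prop : Continuous G).exists_forall_le hlim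
  refine ⟨a, haW, fun c hc => ?_⟩
  have hline : (fun t : ℝ => G (⟨a, haW⟩ + t • ⟨c, hc⟩)) =
      fun t => ∑ i, (f i * exp (-(a i + t * c i)) + y i * (a i + t * c i)) := by
    funext t
    simp only [G, Submodule.coe_add, Submodule.coe_smul, PiLp.add_apply, PiLp.smul_apply,
      smul_eq_mul]
  have hderiv : HasDerivAt (fun t : ℝ => G (⟨a, haW⟩ + t • ⟨c, hc⟩))
      (∑ i, c i * (y i - f i * exp (-a i))) 0 := by
    rw [hline]
    exact HasDerivAt.fun_sum fun i _ => hasDerivAt_mul_exp_neg_add_mul _ _ _ _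
  have hmin : IsLocalMin (fun t : ℝ => G (⟨a, haW⟩ + t • ⟨c, hc⟩)) 0 :=
    .of_forall fun t => by simpa using ha _
  rw [← neg_eq_zero, ← hmin.hasDerivAt_eq_zero hderiv, ← Finset.sum_neg_distrib]
  congr 1 with i
  ring

theorem Topology.isEmbedding_of_forall_tendsto {X Y : Type*} [TopologicalSpace X] [T1Space X]
    [TopologicalSpace Y] {f : X → Y} (hf : Continuous f)
    (h : ∀ x (l : Filter X), Tendsto f l (𝓝 (f x)) → l ≤ 𝓝 x) : IsEmbedding f :=
  ⟨isInducing_iff_nhds.2 fun x => le_antisymm (hf.tendsto x).le_comap (h x _ tendsto_comap),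
    fun x y hxy => pure_le_nhds_iff.1 (h y (pure x) (hxy ▸ tendsto_pure_nhds f x))⟩

section
variable (A : Matrix ι (Fin n) ℝ)

omit [Fintype ι] in
lemma mem_dirSpace_iff {w : EuclideanSpace ℝ ι} :
    w ∈ dirSpace A ↔ ∃ z, A *ᵥ z = w.ofLp := by
  have hcol : ∀ z, ∑ r, z r • (WithLp.toLp 2 (fun i => A i r) : EuclideanSpace ℝ ι) =
      WithLp.toLp 2 (A *ᵥ z) := fun z => by
    ext i
    simp [mulVec, dotProduct, mul_comm]
  simp only [dirSpace, Submodule.mem_span_range_iff_exists_fun, hcol]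
  exact ⟨fun ⟨z, hz⟩ => ⟨z, by rw [← hz]⟩, fun ⟨z, hz⟩ => ⟨z, by rw [hz]⟩⟩

lemma sum_mul_mulVec_eq_zero {a : EuclideanSpace ℝ ι} (ha : a ∈ (dirSpace A)ᗮ)
    (z : Fin n → ℝ) : ∑ i, a i * (A *ᵥ z) i = 0 := by
  have := Submodule.inner_right_of_mem_orthogonal
    ((mem_dirSpace_iff A).2 ⟨z, rfl⟩ : WithLp.toLp 2 (A *ᵥ z) ∈ dirSpace A) ha
  simpa [PiLp.inner_apply, mul_comm] using this

lemma exists_mulVec_eq_of_forall_mem_orthogonal {w : ι → ℝ}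
    (h : ∀ c ∈ (dirSpace A)ᗮ, ∑ i, c i * w i = 0) : ∃ z, A *ᵥ z = w := by
  have hw : WithLp.toLp 2 w ∈ (dirSpace A)ᗮᗮ := fun c hc => by
    simpa [PiLp.inner_apply, mul_comm] using h c hc
  rw [Submodule.orthogonal_orthogonal] at hw
  exact (mem_dirSpace_iff A).1 hw

lemma eq_zero_of_mem_orthogonal_dirSpace {b : ι → ℝ} {x : Fin n → ℝ}
    (hind : LinearIndependent ℝ fun i : {i // (A *ᵥ x) i = b i} => A i)
    {a : EuclideanSpace ℝ ι} (ha : a ∈ (dirSpace A)ᗮ)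
    (hsupp : ∀ i, (A *ᵥ x - b) i ≠ 0 → a i = 0) : a = 0 := by
  classical
  have hvecMul : a.ofLp ᵥ* A = 0 := funext fun r => by
    simpa [mulVec_single_one, vecMul, dotProduct] using
      sum_mul_mulVec_eq_zero A ha (Pi.single r 1)
  have hsum : ∑ i : {i // (A *ᵥ x) i = b i}, a i • A i = 0 := by
    rw [← hvecMul, vecMul_eq_sum,
      ← Fintype.sum_subtype_add_sum_subtype fun i => (A *ᵥ x) i = b i]
    refine (add_eq_left.2 (Finset.sum_eq_zero fun i _ => ?_)).symm
    rw [hsupp i (sub_ne_zero.2 i.2), zero_smul]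
  ext i
  by_cases hi : (A *ᵥ x) i = b i
  · exact Fintype.linearIndependent_iff.1 hind _ hsum ⟨i, hi⟩
  · exact hsupp i (sub_ne_zero.2 hi)

variable (b : ι → ℝ)

noncomputable def expMulFacetDist (x : (Fin n → ℝ) × EuclideanSpace ℝ ι) :
    EuclideanSpace ℝ ι :=
  WithLp.toLp 2 fun i => exp (x.2 i) * (A *ᵥ x.1 - b) i

theorem tendsto_of_tendsto_expMulFacetDist {α : Type*} {l : Filter α} {p : α → Fin n → ℝ}
    {a : α → EuclideanSpace ℝ ι} {p₀ : Fin n → ℝ} {a₀ : EuclideanSpace ℝ ι}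
    (hrank : Function.Injective A.mulVec)
    (hind : LinearIndependent ℝ fun i : {i // (A *ᵥ p₀) i = b i} => A i)
    (hp : ∀ k, b ≤ A *ᵥ p k) (hp₀ : b ≤ A *ᵥ p₀)
    (ha : ∀ k, a k ∈ (dirSpace A)ᗮ) (ha₀ : a₀ ∈ (dirSpace A)ᗮ)
    (h : Tendsto (fun k => expMulFacetDist A b (p k, a k)) l
      (𝓝 (expMulFacetDist A b (p₀, a₀)))) :
    Tendsto p l (𝓝 p₀) ∧ Tendsto a l (𝓝 a₀) := by
  set y := A *ᵥ p₀ - b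
  have hcoord (i : ι) :
      Tendsto (fun k => exp (a k i) * (A *ᵥ p k - b) i) l (𝓝 (exp (a₀ i) * y i)) :=
    ((EuclideanSpace.proj i).continuous.tendsto _).comp h
  have hdist (i : ι) : Tendsto (fun k => (A *ᵥ p k - b) i) l (𝓝 (y i)) := by
    refine tendsto_of_tendsto_exp_mul (c := fun k i => a k i - a₀ i) (sub_nonneg.2 hp₀)
      (fun k => sub_nonneg.2 (hp k)) (fun k => ?_) (fun i => ?_) i
    · have := sum_mul_mulVec_eq_zero A (Submodule.sub_mem _ (ha k) ha₀) (p k - p₀)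
      simpa [y, mulVec_sub] using this
    · have := (hcoord i).const_mul (exp (-a₀ i))
      simpa [y, ← mul_assoc, ← exp_add, sub_eq_add_neg, add_comm] using this
  have hemb := LinearMap.isClosedEmbedding_of_injective (f := A.mulVecLin)
    (LinearMap.ker_eq_bot.2 hrank)
  refine ⟨hemb.tendsto_nhds_iff.2 (tendsto_pi_nhds.2 fun i => ?_), ?_⟩
  · simpa [y] using (hdist i).add_const (b i)
  have hexp (i : ι) (hi : y i ≠ 0) : Tendsto (fun k => a k i) l (𝓝 (a₀ i)) := by
    have h2 := (hcoord i).div (hdist i) hi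
    rw [mul_div_cancel_right₀ _ hi] at h2
    replace h2 : Tendsto (fun k => exp (a k i)) l (𝓝 (exp (a₀ i))) := by
      refine h2.congr' ?_
      filter_upwards [(hdist i).eventually_ne hi] with k hk using mul_div_cancel_right₀ _ hk
    simpa [Function.comp_def] using (continuousAt_log (exp_pos _).ne').tendsto.comp h2
  have hemb' := isClosedEmbedding_restrictCoords (W := (dirSpace A)ᗮ) (s := {i | y i ≠ 0})
    fun c hc hcs => eq_zero_of_mem_orthogonal_dirSpace A hind hc hcs
  have : Tendsto (fun k => (⟨a k, ha k⟩ : (dirSpace A)ᗮ)) l (𝓝 ⟨a₀, ha₀⟩) :=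
    hemb'.tendsto_nhds_iff.2 (tendsto_pi_nhds.2 fun i => hexp i i.2)
  exact (continuous_subtype_val.tendsto _).comp this

theorem isEmbedding_expMulFacetDist (hrank : Function.Injective A.mulVec)
    (hsimple : ∀ x, b ≤ A *ᵥ x →
      LinearIndependent ℝ fun i : {i // (A *ᵥ x) i = b i} => A i) :
    IsEmbedding fun x : {x | b ≤ A *ᵥ x} × (dirSpace A)ᗮ =>
      expMulFacetDist A b (x.1, x.2) := by
  refine isEmbedding_of_forall_tendsto (by unfold expMulFacetDist; fun_prop) fun x l h => ?_
  obtain ⟨hp, ha⟩ := tendsto_of_tendsto_expMulFacetDist A b hrank (hsimple _ x.1.2)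
    (fun z => z.1.2) x.1.2 (fun z => z.2.2) x.2.2 h
  exact tendsto_id'.1 ((tendsto_subtype_rng.2 hp).prodMk_nhds (tendsto_subtype_rng.2 ha))

omit [Fintype ι] in
lemma expMulFacetDist_mem_WR {x : Fin n → ℝ} (hx : b ≤ A *ᵥ x) (a : EuclideanSpace ℝ ι) :
    expMulFacetDist A b (x, a) ∈ WR A b {x | b ≤ A *ᵥ x} := by
  refine ⟨fun i => mul_nonneg (exp_pos _).le (sub_nonneg.2 (hx i)), x, hx, fun i => ?_⟩
  show _ ↔ (A *ᵥ x) i = b i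
  simp [expMulFacetDist, (exp_pos _).ne', sub_eq_zero]

theorem exists_expMulFacetDist_eq
    (hsimple : ∀ x, b ≤ A *ᵥ x →
      LinearIndependent ℝ fun i : {i // (A *ᵥ x) i = b i} => A i)
    {f : EuclideanSpace ℝ ι} (hf : f ∈ WR A b {x | b ≤ A *ᵥ x}) :
    ∃ x a, b ≤ A *ᵥ x ∧ a ∈ (dirSpace A)ᗮ ∧ expMulFacetDist A b (x, a) = f := by
  obtain ⟨hf0, x, hx, hzero⟩ := hf
  obtain ⟨a, ha, horth⟩ := exists_mem_forall_sum_mul_exp_neg_sub_eq_zero (dirSpace A)ᗮ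
    (f := f.ofLp) (y := A *ᵥ x - b) hf0 (fun i => sub_nonneg.2 (hx i))
    (fun i => (hzero i).trans sub_eq_zero.symm)
    fun c hc hcs => eq_zero_of_mem_orthogonal_dirSpace A (hsimple x hx) hc hcs
  obtain ⟨z, hz⟩ := exists_mulVec_eq_of_forall_mem_orthogonal A horth
  have hdist (i : ι) : (A *ᵥ (x + z)) i - b i = f i * exp (-a i) := by
    simp only [mulVec_add, Pi.add_apply, hz, Pi.sub_apply]
    ring
  refine ⟨x + z, a, fun i => sub_nonneg.1 ?_, ha, ?_⟩
  · rw [hdist i]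
    exact mul_nonneg (hf0 i) (exp_pos _).le
  · ext i
    rw [expMulFacetDist, PiLp.toLp_apply, Pi.sub_apply, hdist i, mul_left_comm, ← exp_add,
      add_neg_cancel, exp_zero, mul_one]

end

theorem polytope_prod_perp_homeo_WR_general
    (A : ι → (Fin n → ℝ)) (b : ι → ℝ)
    (Q : Set (Fin n → ℝ))
    (hQ : Q = {x | ∀ i, b i ≤ ∑ r, A i r * x r})
    (hrank : Function.Injective
      (fun x : Fin n → ℝ => (fun i => ∑ r, A i r * x r : ι → ℝ)))
    (hsimple : ∀ x ∈ Q,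
      LinearIndependent ℝ (fun i : {i : ι // ∑ r, A i r * x r = b i} => A i.1)) :
    ∃ h : (Q × (dirSpace A)ᗮ) ≃ₜ (WR A b Q),
      ∀ (p : Q) (a : (dirSpace A)ᗮ) (i : ι),
        (h (p, a)).1 i = Real.exp (a.1 i) * ((∑ r, A i r * p.1 r) - b i) := by
  subst hQ
  have hemb := (isEmbedding_expMulFacetDist A b hrank hsimple).codRestrict _
    fun x => expMulFacetDist_mem_WR A b x.1.2 x.2
  refine ⟨hemb.toHomeomorphOfSurjective ?_, fun p a i => rfl⟩
  rintro ⟨f, hf⟩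
  obtain ⟨x, a, hx, ha, rfl⟩ := exists_expMulFacetDist_eq A b hsimple hf
  exact ⟨(⟨x, hx⟩, ⟨a, ha⟩), rfl⟩

/-- The map `(p, a) ↦ exp(a) * d(p)` (coordinatewise) is a homeomorphism from
`P × V_P^⊥` onto the subspace `W^ℝ(P) ⊂ ℝ^ℱ_{≥0}`, where `P` is embedded in
`ℝ^ℱ_{≥0}` by the facet-distance map `d(p) = A_P p − b`. -/
theorem polytope_prod_perp_homeo_WR
    (A : ι → (Fin n → ℝ)) (b : ι → ℝ)
    (Q : Set (Fin n → ℝ))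
    (hQ : Q = {x | ∀ i, b i ≤ ∑ r, A i r * x r})
    (hne : Q.Nonempty)
    (hrank : Function.Injective
      (fun x : Fin n → ℝ => (fun i => ∑ r, A i r * x r : ι → ℝ)))
    (hsimple : ∀ x ∈ Q,
      LinearIndependent ℝ (fun i : {i : ι // ∑ r, A i r * x r = b i} => A i.1)) :
    ∃ h : (Q × (dirSpace A)ᗮ) ≃ₜ (WR A b Q),
      ∀ (p : Q) (a : (dirSpace A)ᗮ) (i : ι),
        (h (p, a)).1 i = Real.exp (a.1 i) * ((∑ r, A i r * p.1 r) - b i) :=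
  polytope_prod_perp_homeo_WR_general A b Q hQ hrank hsimple
end

section
/- For 0 < m < n, the product Δᵐ × Δ^{n−m} of standard simplices is combinatorially equivalent to a face truncation Π_G(Δⁿ) of the standard n-simplex at a suitable face G; moreover given any vertex v of Δᵐ × Δ^{n−m}, the equivalence can be chosen to map v to a vertex v′ of Δⁿ not contained in G. -/
open Set

/-- The standard `n`-simplex in `ℝⁿ`. -/
def stdSimplexSet (n : ℕ) : Set (Fin n → ℝ) :=
  {x | (∀ r, 0 ≤ x r) ∧ ∑ r, x r ≤ 1}

/-- The poset of (exposed) faces of a subset of a real topological vector space,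
ordered by inclusion.  For polytopes this is the face lattice, so an order
isomorphism of face posets is a combinatorial equivalence. -/
def facePoset {E : Type*} [AddCommMonoid E] [Module ℝ E] [TopologicalSpace E]
    (P : Set E) : Type _ :=
  {F : Set E // IsExposed ℝ P F}

instance {E : Type*} [AddCommMonoid E] [Module ℝ E] [TopologicalSpace E]
    (P : Set E) : PartialOrder (facePoset P) :=
  Subtype.partialOrder _

/-!
Split the coordinates of `ℝⁿ` by `σ : Fin m ⊕ Fin k ≃ Fin n` and let `s z` be the sum of the
coordinates in the first block. The projective map `(u, w) ↦ (u, w) / (1 + ∑ u)` carries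
`Δᵐ × Δᵏ` bijectively onto `Δⁿ ∩ {s ≤ 1/2}`, with inverse `z ↦ z / (1 - s z)`; this is the
truncation of `Δⁿ` at the face `G = {s = 1}` spanned by the first `m` vertices. A
linear-fractional map with positive denominator pulls affine functions back to positive multiples
of affine functions, so it carries exposed faces to exposed faces, and the bijection induces an
isomorphism of face posets. Finally, each factor simplex has an affine involution moving a
prescribed vertex to `0`, and `0` is sent to the vertex `0 ∉ G` of `Δⁿ`.
-/

section LinearFractional

variable {E F : Type*} [AddCommGroup E] [Module ℝ E] [TopologicalSpace E]
  [AddCommGroup F] [Module ℝ F] [TopologicalSpace F]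

def IsLinearFractionalOn (Ψ : E → F) (S : Set E) : Prop :=
  ∃ (A : E →L[ℝ] F) (c : F) (g : StrongDual ℝ E) (γ : ℝ),
    ∀ z ∈ S, 0 < g z + γ ∧ (g z + γ) • Ψ z = A z + c

lemma isLinearFractionalOn_of_eq_add {Ψ : E → F} {S : Set E} (A : E →L[ℝ] F) (c : F)
    (h : ∀ z ∈ S, Ψ z = A z + c) : IsLinearFractionalOn Ψ S :=
  ⟨A, c, 0, 1, fun z hz => by simp [h z hz]⟩

lemma IsLinearFractionalOn.exists_affine_eq_pos_mul {Ψ : E → F} {S : Set E}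
    (hΨ : IsLinearFractionalOn Ψ S) (l : StrongDual ℝ F) (M : ℝ) :
    ∃ (k : StrongDual ℝ E) (d : ℝ), ∀ z ∈ S, ∃ t : ℝ, 0 < t ∧ k z - d = t * (l (Ψ z) - M) := by
  obtain ⟨A, c, g, γ, h⟩ := hΨ
  refine ⟨l.comp A - M • g, M * γ - l c, fun z hz => ⟨g z + γ, (h z hz).1, ?_⟩⟩
  have hl := congrArg l (h z hz).2
  simp only [map_smul, map_add, smul_eq_mul] at hl
  simp only [sub_apply, ContinuousLinearMap.comp_apply, smul_apply, smul_eq_mul]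
  linear_combination -hl

lemma IsExposed.image_of_invOn {P : Set E} {Q : Set F} {Φ : E → F} {Ψ : F → E}
    (hinv : InvOn Ψ Φ P Q) (hΦ : MapsTo Φ P Q) (hΨ : MapsTo Ψ Q P)
    (hΨlf : IsLinearFractionalOn Ψ Q) {A : Set E} (hA : IsExposed ℝ P A) :
    IsExposed ℝ Q (Φ '' A) := by
  rintro ⟨_, x₀, hx₀, rfl⟩
  obtain ⟨l, rfl⟩ := hA ⟨x₀, hx₀⟩
  obtain ⟨k, d, hk⟩ := hΨlf.exists_affine_eq_pos_mul l (l x₀)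
  have hle : ∀ z ∈ Q, k z ≤ d := fun z hz => by
    obtain ⟨t, ht, h⟩ := hk z hz
    nlinarith [hx₀.2 _ (hΨ hz)]
  have heq : ∀ z ∈ Q, k z = d ↔ l (Ψ z) = l x₀ := fun z hz => by
    obtain ⟨t, ht, h⟩ := hk z hz
    rw [← sub_eq_zero, h, mul_eq_zero, sub_eq_zero, or_iff_right ht.ne']
  have hd : k (Φ x₀) = d := (heq _ (hΦ hx₀.1)).2 (by rw [hinv.1 hx₀.1])
  refine ⟨k, Set.ext fun z => ⟨?_, ?_⟩⟩
  · rintro ⟨x, hx, rfl⟩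
    have hlx : l x = l x₀ := le_antisymm (hx₀.2 x hx.1) (hx.2 x₀ hx₀.1)
    refine ⟨hΦ hx.1, fun w hw => (hle w hw).trans ((heq _ (hΦ hx.1)).2 ?_).ge⟩
    rw [hinv.1 hx.1, hlx]
  · rintro ⟨hz, hmax⟩
    have hlz : l (Ψ z) = l x₀ := (heq z hz).1 (le_antisymm (hle z hz) (hd ▸ hmax _ (hΦ hx₀.1)))
    exact ⟨Ψ z, ⟨hΨ hz, fun y hy => hlz ▸ hx₀.2 y hy⟩, hinv.2 hz⟩

def facePosetOrderIsoOfInvOn {P : Set E} {Q : Set F} {Φ : E → F} {Ψ : F → E}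
    (hinv : InvOn Ψ Φ P Q) (hΦ : MapsTo Φ P Q) (hΨ : MapsTo Ψ Q P)
    (hΦlf : IsLinearFractionalOn Φ P) (hΨlf : IsLinearFractionalOn Ψ Q) :
    facePoset P ≃o facePoset Q where
  toFun A := ⟨Φ '' A.1, A.2.image_of_invOn hinv hΦ hΨ hΨlf⟩
  invFun B := ⟨Ψ '' B.1, B.2.image_of_invOn hinv.symm hΨ hΦ hΦlf⟩
  left_inv A := Subtype.ext (hinv.1.image_image' A.2.subset)
  right_inv B := Subtype.ext (hinv.2.image_image' B.2.subset)
  map_rel_iff' {A B} := hinv.1.injOn.image_subset_image_iff A.2.subset B.2.subset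

end LinearFractional

section StdSimplexSet

variable {p : ℕ}

def coordSum (p : ℕ) : StrongDual ℝ (Fin p → ℝ) := ∑ i, ContinuousLinearMap.proj i

@[simp]
lemma coordSum_apply (x : Fin p → ℝ) : coordSum p x = ∑ i, x i := by
  simp [coordSum]

lemma zero_mem_stdSimplexSet : (0 : Fin p → ℝ) ∈ stdSimplexSet p :=
  ⟨fun _ => le_rfl, by simp⟩

lemma single_mem_stdSimplexSet (i : Fin p) : (Pi.single i 1 : Fin p → ℝ) ∈ stdSimplexSet p :=
  ⟨fun j => by by_cases h : j = i <;> simp [h], by simp⟩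

lemma stdSimplexSet_eq_image_stdSimplex (p : ℕ) :
    stdSimplexSet p = LinearMap.funLeft ℝ ℝ (Option.some : Fin p → Option (Fin p)) ''
      stdSimplex ℝ (Option (Fin p)) := by
  ext x
  constructor
  · intro hx
    refine ⟨fun o => o.elim (1 - ∑ i, x i) x, ⟨?_, ?_⟩, rfl⟩
    · rintro (_ | i)
      · simpa using hx.2
      · exact hx.1 i
    · simp [Fintype.sum_option]
  · rintro ⟨y, ⟨hy0, hy1⟩, rfl⟩
    refine ⟨fun i => hy0 _, ?_⟩
    rw [Fintype.sum_option] at hy1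
    simp only [LinearMap.funLeft_apply]
    linarith [hy0 none]

lemma extremePoints_stdSimplexSet_subset (p : ℕ) :
    extremePoints ℝ (stdSimplexSet p) ⊆ insert 0 (range fun i : Fin p => Pi.single i 1) := by
  rw [stdSimplexSet_eq_image_stdSimplex, ← convexHull_rangle_single_eq_stdSimplex,
    LinearMap.image_convexHull]
  refine extremePoints_convexHull_subset.trans ?_
  rintro _ ⟨_, ⟨_ | i, rfl⟩, rfl⟩
  · left; ext j; simp
  · right; refine ⟨i, ?_⟩; ext j; simp [Pi.single_apply]

lemma zero_mem_extremePoints_stdSimplexSet :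
    (0 : Fin p → ℝ) ∈ extremePoints ℝ (stdSimplexSet p) := by
  refine ⟨zero_mem_stdSimplexSet, fun x hx y hy ⟨s, t, hs, ht, _, hsum⟩ => funext fun r => ?_⟩
  have hr := congrFun hsum r
  simp only [Pi.add_apply, Pi.smul_apply, smul_eq_mul, Pi.zero_apply] at hr
  have hxr :=
    (add_eq_zero_iff_of_nonneg (mul_nonneg hs.le (hx.1 r)) (mul_nonneg ht.le (hy.1 r))).1 hr
  exact (mul_eq_zero.1 hxr.1).resolve_left hs.ne'

/-- In barycentric coordinates `(1 - ∑ x, x)` this transposes the slack coordinate with the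
`i`-th one, so it is an affine involution of `Δᵖ` exchanging the vertices `0` and
`Pi.single i 1`. -/
def swapSlack (i : Fin p) (x : Fin p → ℝ) : Fin p → ℝ :=
  Function.update x i (1 - ∑ j, x j)

lemma sum_swapSlack (i : Fin p) (x : Fin p → ℝ) : ∑ j, swapSlack i x j = 1 - x i := by
  rw [swapSlack, Finset.sum_update_of_mem (Finset.mem_univ i),
    Finset.sum_eq_add_sum_sdiff_singleton_of_mem (Finset.mem_univ i) x]
  ring

lemma swapSlack_swapSlack (i : Fin p) (x : Fin p → ℝ) : swapSlack i (swapSlack i x) = x := by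
  rw [swapSlack, sum_swapSlack, swapSlack, Function.update_idem, sub_sub_cancel,
    Function.update_eq_self]

lemma swapSlack_single (i : Fin p) : swapSlack i (Pi.single i 1) = 0 := by
  ext j
  by_cases h : j = i <;> simp [swapSlack, h]

lemma mapsTo_swapSlack (i : Fin p) : MapsTo (swapSlack i) (stdSimplexSet p) (stdSimplexSet p) := by
  intro x hx
  refine ⟨fun j => ?_, by rw [sum_swapSlack]; linarith [hx.1 i]⟩
  rcases eq_or_ne j i with rfl | hj
  · simpa [swapSlack] using hx.2
  · simpa [swapSlack, hj] using hx.1 j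

lemma swapSlack_eq_add (i : Fin p) (x : Fin p → ℝ) :
    swapSlack i x = (ContinuousLinearMap.id ℝ (Fin p → ℝ) -
      (coordSum p + ContinuousLinearMap.proj i).smulRight (Pi.single i 1 : Fin p → ℝ)) x +
      Pi.single i 1 := by
  ext j
  rcases eq_or_ne j i with rfl | hj
  · simp [swapSlack]; ring
  · simp [swapSlack, hj]

lemma exists_affine_involution_of_mem_extremePoints {a : Fin p → ℝ}
    (ha : a ∈ extremePoints ℝ (stdSimplexSet p)) :
    ∃ T : (Fin p → ℝ) → (Fin p → ℝ),
      (∃ (A : (Fin p → ℝ) →L[ℝ] (Fin p → ℝ)) (c : Fin p → ℝ), ∀ x, T x = A x + c) ∧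
      MapsTo T (stdSimplexSet p) (stdSimplexSet p) ∧ LeftInvOn T T (stdSimplexSet p) ∧
      T a = 0 := by
  rcases extremePoints_stdSimplexSet_subset p ha with rfl | ⟨i, rfl⟩
  · exact ⟨id, ⟨ContinuousLinearMap.id ℝ _, 0, by simp⟩, mapsTo_id _, fun _ _ => rfl, rfl⟩
  · exact ⟨swapSlack i, ⟨_, _, swapSlack_eq_add i⟩, mapsTo_swapSlack i,
      fun x _ => swapSlack_swapSlack i x, swapSlack_single i⟩

end StdSimplexSet

lemma exists_facePosetOrderIso_singleton_eq_zero {m k : ℕ} {v : (Fin m → ℝ) × (Fin k → ℝ)}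
    (hv : v ∈ extremePoints ℝ (stdSimplexSet m ×ˢ stdSimplexSet k)) :
    ∃ e : facePoset (stdSimplexSet m ×ˢ stdSimplexSet k) ≃o
        facePoset (stdSimplexSet m ×ˢ stdSimplexSet k),
      ∀ hv' : IsExposed ℝ (stdSimplexSet m ×ˢ stdSimplexSet k) {v}, (e ⟨{v}, hv'⟩).1 = {0} := by
  rw [extremePoints_prod] at hv
  obtain ⟨T₁, ⟨A₁, c₁, hT₁⟩, hmaps₁, hinv₁, hv₁⟩ :=
    exists_affine_involution_of_mem_extremePoints hv.1
  obtain ⟨T₂, ⟨A₂, c₂, hT₂⟩, hmaps₂, hinv₂, hv₂⟩ :=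
    exists_affine_involution_of_mem_extremePoints hv.2
  have hmaps := hmaps₁.prodMap hmaps₂
  have hinv : InvOn (Prod.map T₁ T₂) (Prod.map T₁ T₂) _ _ :=
    ⟨hinv₁.prodMap hinv₂, hinv₁.prodMap hinv₂⟩
  have hlf : IsLinearFractionalOn (Prod.map T₁ T₂) (stdSimplexSet m ×ˢ stdSimplexSet k) :=
    isLinearFractionalOn_of_eq_add (A₁.prodMap A₂) (c₁, c₂) fun x _ => Prod.ext (hT₁ x.1) (hT₂ x.2)
  refine ⟨facePosetOrderIsoOfInvOn hinv hmaps hmaps hlf hlf, fun _ => ?_⟩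
  show Prod.map T₁ T₂ '' {v} = {0}
  rw [image_singleton, Prod.map_apply, hv₁, hv₂, Prod.mk_zero_zero]

namespace SimplexProduct

variable {m k n : ℕ} (σ : Fin m ⊕ Fin k ≃ Fin n)

def gluing : ((Fin m → ℝ) × (Fin k → ℝ)) ≃ₗ[ℝ] (Fin n → ℝ) :=
  (LinearEquiv.sumArrowLequivProdArrow _ _ ℝ ℝ).symm.trans (LinearEquiv.funCongrLeft ℝ ℝ σ.symm)

@[simp]
lemma gluing_apply_inl (y : (Fin m → ℝ) × (Fin k → ℝ)) (i : Fin m) :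
    gluing σ y (σ (.inl i)) = y.1 i := by
  simp [gluing, LinearEquiv.funCongrLeft_apply]
  rfl

@[simp]
lemma gluing_apply_inr (y : (Fin m → ℝ) × (Fin k → ℝ)) (j : Fin k) :
    gluing σ y (σ (.inr j)) = y.2 j := by
  simp [gluing, LinearEquiv.funCongrLeft_apply]
  rfl

@[simp]
lemma gluing_symm_apply (z : Fin n → ℝ) :
    (gluing σ).symm z = (fun i => z (σ (.inl i)), fun j => z (σ (.inr j))) := by
  rw [LinearEquiv.symm_apply_eq]
  ext r
  obtain ⟨s | s, rfl⟩ := σ.surjective r <;> simp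

lemma gluing_mem_stdSimplexSet_iff (y : (Fin m → ℝ) × (Fin k → ℝ)) :
    gluing σ y ∈ stdSimplexSet n ↔
      (∀ i, 0 ≤ y.1 i) ∧ (∀ j, 0 ≤ y.2 j) ∧ ∑ i, y.1 i + ∑ j, y.2 j ≤ 1 := by
  simp only [stdSimplexSet, mem_ofPred_eq, ← σ.forall_congr_right, Sum.forall,
    ← Equiv.sum_comp σ, Fintype.sum_sum_type, gluing_apply_inl, gluing_apply_inr, and_assoc]

def leftBlockSum : StrongDual ℝ (Fin n → ℝ) := ∑ i, ContinuousLinearMap.proj (σ (.inl i))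

@[simp]
lemma leftBlockSum_apply (z : Fin n → ℝ) : leftBlockSum σ z = ∑ i, z (σ (.inl i)) := by
  simp [leftBlockSum]

def truncation : Set (Fin n → ℝ) := stdSimplexSet n ∩ {z | leftBlockSum σ z ≤ 1 / 2}

noncomputable def toTruncation (x : (Fin m → ℝ) × (Fin k → ℝ)) : Fin n → ℝ :=
  (1 + ∑ i, x.1 i)⁻¹ • gluing σ x

noncomputable def ofTruncation (z : Fin n → ℝ) : (Fin m → ℝ) × (Fin k → ℝ) :=
  (1 - leftBlockSum σ z)⁻¹ • (gluing σ).symm z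

lemma toTruncation_zero : toTruncation σ 0 = 0 := by
  simp [toTruncation]

lemma leftBlockSum_toTruncation (x : (Fin m → ℝ) × (Fin k → ℝ)) :
    leftBlockSum σ (toTruncation σ x) = (1 + ∑ i, x.1 i)⁻¹ * ∑ i, x.1 i := by
  simp [toTruncation, Finset.mul_sum]

lemma sum_fst_ofTruncation (z : Fin n → ℝ) :
    ∑ i, (ofTruncation σ z).1 i = (1 - leftBlockSum σ z)⁻¹ * leftBlockSum σ z := by
  simp [ofTruncation, Finset.mul_sum]

lemma mapsTo_toTruncation :
    MapsTo (toTruncation σ) (stdSimplexSet m ×ˢ stdSimplexSet k) (truncation σ) := by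
  rintro x ⟨hx₁, hx₂⟩
  have hs : 0 ≤ ∑ i, x.1 i := Finset.sum_nonneg fun i _ => hx₁.1 i
  refine ⟨?_, ?_⟩
  · rw [toTruncation, ← map_smul, gluing_mem_stdSimplexSet_iff]
    refine ⟨fun i => ?_, fun j => ?_, ?_⟩
    · simpa using mul_nonneg (inv_nonneg.2 (by positivity)) (hx₁.1 i)
    · simpa using mul_nonneg (inv_nonneg.2 (by positivity)) (hx₂.1 j)
    · simp only [Prod.smul_fst, Prod.smul_snd, Pi.smul_apply, smul_eq_mul, ← Finset.mul_sum,
        ← mul_add]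
      rw [inv_mul_le_one₀ (by positivity)]
      linarith [hx₂.2]
  · show leftBlockSum σ (toTruncation σ x) ≤ 1 / 2
    rw [leftBlockSum_toTruncation, inv_mul_le_iff₀ (by positivity)]
    linarith [hx₁.2]

lemma mapsTo_ofTruncation :
    MapsTo (ofTruncation σ) (truncation σ) (stdSimplexSet m ×ˢ stdSimplexSet k) := by
  rintro z ⟨hz, hcut : leftBlockSum σ z ≤ 1 / 2⟩
  obtain ⟨hz₁, hz₂, hsum⟩ :=
    (gluing_mem_stdSimplexSet_iff σ ((gluing σ).symm z)).1 (by rwa [LinearEquiv.apply_symm_apply])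
  simp only [gluing_symm_apply] at hz₁ hz₂ hsum
  have hpos : 0 < 1 - leftBlockSum σ z := by linarith
  refine ⟨⟨fun i => ?_, ?_⟩, ⟨fun j => ?_, ?_⟩⟩
  · simpa [ofTruncation] using mul_nonneg (inv_nonneg.2 hpos.le) (hz₁ i)
  · rw [sum_fst_ofTruncation, inv_mul_le_one₀ hpos]
    linarith
  · simpa [ofTruncation] using mul_nonneg (inv_nonneg.2 hpos.le) (hz₂ j)
  · simp only [ofTruncation, gluing_symm_apply, Prod.smul_snd, Pi.smul_apply, smul_eq_mul,
      ← Finset.mul_sum]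
    rw [inv_mul_le_one₀ hpos, leftBlockSum_apply]
    linarith

lemma invOn_ofTruncation :
    InvOn (ofTruncation σ) (toTruncation σ) (stdSimplexSet m ×ˢ stdSimplexSet k)
      (truncation σ) := by
  constructor
  · intro x hx
    have hs : 0 < 1 + ∑ i, x.1 i := by
      linarith [Finset.sum_nonneg fun i (_ : i ∈ Finset.univ) => hx.1.1 i]
    have hscale : (1 - leftBlockSum σ (toTruncation σ x))⁻¹ * (1 + ∑ i, x.1 i)⁻¹ = 1 := by
      rw [leftBlockSum_toTruncation]
      field_simp
      ring
    have hglue : (gluing σ).symm (toTruncation σ x) = (1 + ∑ i, x.1 i)⁻¹ • x := by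
      rw [toTruncation, map_smul, LinearEquiv.symm_apply_apply]
    rw [ofTruncation, hglue, smul_smul, hscale, one_smul]
  · intro z hz
    have hpos : 0 < 1 - leftBlockSum σ z := by linarith [hz.2.out]
    have hscale : (1 + ∑ i, (ofTruncation σ z).1 i)⁻¹ * (1 - leftBlockSum σ z)⁻¹ = 1 := by
      rw [sum_fst_ofTruncation]
      field_simp
      ring
    have hglue : gluing σ (ofTruncation σ z) = (1 - leftBlockSum σ z)⁻¹ • z := by
      rw [ofTruncation, map_smul, LinearEquiv.apply_symm_apply]
    rw [toTruncation, hglue, smul_smul, hscale, one_smul]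

lemma isLinearFractionalOn_toTruncation :
    IsLinearFractionalOn (toTruncation σ) (stdSimplexSet m ×ˢ stdSimplexSet k) := by
  refine ⟨(gluing σ).toContinuousLinearEquiv, 0,
    (coordSum m).comp (ContinuousLinearMap.fst ℝ _ _), 1, fun x hx => ?_⟩
  have hpos : 0 < 1 + ∑ i, x.1 i := by
    linarith [Finset.sum_nonneg fun i (_ : i ∈ Finset.univ) => hx.1.1 i]
  rw [ContinuousLinearMap.comp_apply, ContinuousLinearMap.coe_fst', coordSum_apply, add_comm,
    toTruncation, smul_inv_smul₀ hpos.ne', add_zero]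
  exact ⟨hpos, rfl⟩

lemma isLinearFractionalOn_ofTruncation :
    IsLinearFractionalOn (ofTruncation σ) (truncation σ) := by
  refine ⟨(gluing σ).symm.toContinuousLinearEquiv, 0, -leftBlockSum σ, 1, fun z hz => ?_⟩
  have hpos : 0 < 1 - leftBlockSum σ z := by linarith [hz.2.out]
  rw [neg_apply, neg_add_eq_sub, ofTruncation, smul_inv_smul₀ hpos.ne', add_zero]
  exact ⟨hpos, rfl⟩

lemma leftBlockSum_le_one {z : Fin n → ℝ} (hz : z ∈ stdSimplexSet n) : leftBlockSum σ z ≤ 1 := by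
  obtain ⟨-, hz₂, hsum⟩ := (gluing_mem_stdSimplexSet_iff σ ((gluing σ).symm z)).1
    (by rwa [LinearEquiv.apply_symm_apply])
  simp only [gluing_symm_apply] at hz₂ hsum
  rw [leftBlockSum_apply]
  linarith [Finset.sum_nonneg fun j (_ : j ∈ Finset.univ) => hz₂ j]

lemma leftBlockSum_single_inl (i : Fin m) : leftBlockSum σ (Pi.single (σ (.inl i)) 1) = 1 := by
  simp [Pi.single_apply]

lemma leftBlockSum_eq_zero_or_one {x : Fin n → ℝ} (hx : x ∈ extremePoints ℝ (stdSimplexSet n)) :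
    leftBlockSum σ x = 0 ∨ leftBlockSum σ x = 1 := by
  rcases extremePoints_stdSimplexSet_subset n hx with rfl | ⟨r, rfl⟩
  · simp
  · obtain ⟨i | j, rfl⟩ := σ.surjective r
    · exact .inr (leftBlockSum_single_inl σ i)
    · simp

lemma mem_toExposed_leftBlockSum_iff (hm : 0 < m) {z : Fin n → ℝ} :
    z ∈ (leftBlockSum σ).toExposed (stdSimplexSet n) ↔
      z ∈ stdSimplexSet n ∧ leftBlockSum σ z = 1 := by
  have hvert := single_mem_stdSimplexSet (σ (.inl ⟨0, hm⟩))
  constructor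
  · rintro ⟨hz, hmax⟩
    exact ⟨hz, le_antisymm (leftBlockSum_le_one σ hz) (leftBlockSum_single_inl σ _ ▸ hmax _ hvert)⟩
  · rintro ⟨hz, h1⟩
    exact ⟨hz, fun y hy => h1 ▸ leftBlockSum_le_one σ hy⟩

noncomputable def faceOrderIso :
    facePoset (stdSimplexSet m ×ˢ stdSimplexSet k) ≃o facePoset (truncation σ) :=
  facePosetOrderIsoOfInvOn (invOn_ofTruncation σ) (mapsTo_toTruncation σ) (mapsTo_ofTruncation σ)
    (isLinearFractionalOn_toTruncation σ) (isLinearFractionalOn_ofTruncation σ)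

end SimplexProduct

/-- For `0 < m < n`, the product `Δᵐ × Δ^{n−m}` of standard simplices is
combinatorially equivalent to a face truncation `Π_G(Δⁿ)` of the standard
`n`-simplex at a suitable proper face `G` (cut off by a halfspace `f ≤ c` whose
bounding hyperplane strictly separates the vertices of `G` from the other
vertices); moreover, given any vertex `v` of `Δᵐ × Δ^{n−m}`, the equivalence can
be chosen to carry the face `{v}` to a vertex `v′` of `Δⁿ` not contained in `G`. -/
theorem simplex_product_is_truncated_simplex
    (m n : ℕ) (h0 : 0 < m) (hmn : m < n)
    (v : (Fin m → ℝ) × (Fin (n - m) → ℝ))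
    (hv : v ∈ Set.extremePoints ℝ (stdSimplexSet m ×ˢ stdSimplexSet (n - m))) :
    ∃ (G : Set (Fin n → ℝ)) (f : (Fin n → ℝ) →ₗ[ℝ] ℝ) (c : ℝ) (v' : Fin n → ℝ),
      IsExposed ℝ (stdSimplexSet n) G ∧ G.Nonempty ∧ G ≠ stdSimplexSet n ∧
      (∀ x ∈ Set.extremePoints ℝ (stdSimplexSet n),
        (x ∈ G → c < f x) ∧ (x ∉ G → f x < c)) ∧
      v' ∈ Set.extremePoints ℝ (stdSimplexSet n) ∧ v' ∉ G ∧
      ∃ e : facePoset (stdSimplexSet m ×ˢ stdSimplexSet (n - m)) ≃o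
              facePoset (stdSimplexSet n ∩ {x | f x ≤ c}),
        ∀ hv' : IsExposed ℝ (stdSimplexSet m ×ˢ stdSimplexSet (n - m)) {v},
          (e ⟨{v}, hv'⟩ : facePoset (stdSimplexSet n ∩ {x | f x ≤ c})).1 = {v'} := by
  let σ : Fin m ⊕ Fin (n - m) ≃ Fin n :=
    finSumFinEquiv.trans (finCongr (Nat.add_sub_cancel' hmn.le))
  let s := SimplexProduct.leftBlockSum σ
  have hG (z) : z ∈ s.toExposed (stdSimplexSet n) ↔ z ∈ stdSimplexSet n ∧ s z = 1 :=
    SimplexProduct.mem_toExposed_leftBlockSum_iff σ h0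
  have hzero : (0 : Fin n → ℝ) ∉ s.toExposed (stdSimplexSet n) := by simp [hG]
  obtain ⟨e, he⟩ := exists_facePosetOrderIso_singleton_eq_zero hv
  refine ⟨s.toExposed (stdSimplexSet n), s, 1 / 2, 0, ContinuousLinearMap.toExposed.isExposed,
    ⟨_, (hG _).2 ⟨single_mem_stdSimplexSet _, SimplexProduct.leftBlockSum_single_inl σ ⟨0, h0⟩⟩⟩,
    fun h => hzero (h.symm ▸ zero_mem_stdSimplexSet), fun x hx => ?_,
    zero_mem_extremePoints_stdSimplexSet, hzero, e.trans (SimplexProduct.faceOrderIso σ),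
    fun hv' => ?_⟩
  · obtain h | h : s x = 0 ∨ s x = 1 := SimplexProduct.leftBlockSum_eq_zero_or_one σ hx
    all_goals norm_num [hG, h, hx.1]
  · show SimplexProduct.toTruncation σ '' (e ⟨{v}, hv'⟩).1 = {0}
    rw [he, image_singleton, SimplexProduct.toTruncation_zero]
end

section
/- Face truncation commutes with products: for simple polytopes P and Q and a face E of P, the polytope Π_E(P) × Q is combinatorially equivalent to Π_{E×Q}(P × Q), and symmetrically P × Π_F(Q) is combinatorially equivalent to Π_{P×F}(P × Q) for a face F of Q. -/
open Set

/-! Both sides are truncations of the polytope `P × Q` by halfspaces that cut off the same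
vertices, namely those lying over `E` (resp. `F`). For a polytope `K = {x | ∀ i, f i x ≤ b i}`
and a halfspace `{g ≤ d}` whose boundary contains no vertex of `K`, every nonempty face of
`K ∩ {g ≤ d}` is cut out by the constraints active on it, so the face poset is determined by
which sets of constraints can be simultaneously tight and which further constraints they force.
Both depend only on the vertex partition: a face `G` of `K` meets `{g ≤ d}` iff it has a vertex
there, meets `{g = d}` iff it has vertices on both sides, and a constraint of `K` that is tight
on either section of `G` is already tight on all of `G`, since every point of `G` lies on an open
segment through a point of the section and a point of `G`. -/

open Filter Topology

section Polyhedron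

variable {V : Type*} [NormedAddCommGroup V] [NormedSpace ℝ V] {ι : Type*}

def polyhedron (f : ι → V →ₗ[ℝ] ℝ) (b : ι → ℝ) : Set V := {x | ∀ i, f i x ≤ b i}

def activeFace (f : ι → V →ₗ[ℝ] ℝ) (b : ι → ℝ) (S : Set ι) : Set V :=
  {x ∈ polyhedron f b | ∀ i ∈ S, f i x = b i}

def activeSet (f : ι → V →ₗ[ℝ] ℝ) (b : ι → ℝ) (A : Set V) : Set ι :=
  {i | ∀ x ∈ A, f i x = b i}

variable (f : ι → V →ₗ[ℝ] ℝ) (b : ι → ℝ)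

theorem convex_polyhedron : Convex ℝ (polyhedron f b) := by
  simpa only [polyhedron, ofPred_forall] using
    convex_iInter fun i => convex_halfSpace_le (f i).isLinear (b i)

theorem activeFace_anti : Antitone (activeFace f b) :=
  fun _ _ hST _ hx => ⟨hx.1, fun i hi => hx.2 i (hST hi)⟩

theorem activeSet_anti : Antitone (activeSet f b) :=
  fun _ _ hAB _ hi x hx => hi x (hAB hx)

theorem exists_pos_add_smul_mem_polyhedron [Finite ι] {x v : V} (hx : x ∈ polyhedron f b)
    (hv : ∀ i, f i x = b i → f i v ≤ 0) : ∃ t : ℝ, 0 < t ∧ x + t • v ∈ polyhedron f b := by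
  have : ∀ᶠ t in 𝓝[>] (0 : ℝ), x + t • v ∈ polyhedron f b := by
    refine eventually_all.2 fun i => ?_
    simp only [map_add, map_smul, smul_eq_mul]
    rcases (hx i).eq_or_lt with hxi | hxi
    · filter_upwards [self_mem_nhdsWithin] with t ht
      nlinarith [hv i hxi, mem_Ioi.1 ht]
    · have hcont : Tendsto (fun t : ℝ => f i x + t * f i v) (𝓝 0) (𝓝 (f i x)) := by
        simpa using ((continuous_mul_const (f i v)).tendsto 0).const_add (f i x)
      exact nhdsWithin_le_nhds ((hcont.eventually_lt_const hxi).mono fun _ => le_of_lt)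
  obtain ⟨t, ht, ht0⟩ := (this.and self_mem_nhdsWithin).exists
  exact ⟨t, ht0, ht⟩

theorem Convex.exists_forall_lt {κ : Type*} {s : Set V} (hs : Convex ℝ s) (hne : s.Nonempty)
    (φ : κ → V →ₗ[ℝ] ℝ) (c : κ → ℝ) (T : Finset κ) (hle : ∀ i ∈ T, ∀ x ∈ s, φ i x ≤ c i)
    (hlt : ∀ i ∈ T, ∃ x ∈ s, φ i x < c i) : ∃ x ∈ s, ∀ i ∈ T, φ i x < c i := by
  classical
  induction T using Finset.induction_on with
  | empty => exact hne.imp fun _ hx => ⟨hx, by simp⟩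
  | insert j T _ ih =>
    obtain ⟨x, hxs, hx⟩ := ih (fun i hi => hle i (Finset.mem_insert_of_mem hi))
      (fun i hi => hlt i (Finset.mem_insert_of_mem hi))
    obtain ⟨z, hzs, hz⟩ := hlt j (Finset.mem_insert_self j T)
    refine ⟨(1 / 2 : ℝ) • x + (1 / 2 : ℝ) • z,
      hs hxs hzs (by norm_num) (by norm_num) (by norm_num), fun i hi => ?_⟩
    have hxi := hle i hi x hxs
    have hzi := hle i hi z hzs
    simp only [map_add, map_smul, smul_eq_mul]
    rcases Finset.mem_insert.1 hi with rfl | hi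
    · linarith
    · linarith [hx i hi]

theorem isExposed_activeFace [Fintype ι] [FiniteDimensional ℝ V] (S : Set ι) :
    IsExposed ℝ (polyhedron f b) (activeFace f b S) := by
  classical
  rintro ⟨w, hw⟩
  set T := Finset.univ.filter (· ∈ S)
  set l : V →ₗ[ℝ] ℝ := ∑ i ∈ T, f i
  have hl : ∀ x, l x = ∑ i ∈ T, f i x := fun x => LinearMap.sum_apply T f x
  have hle : ∀ x ∈ polyhedron f b, l x ≤ ∑ i ∈ T, b i := fun x hx =>
    (hl x).trans_le (Finset.sum_le_sum fun i _ => hx i)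
  have heq : ∀ x ∈ polyhedron f b, l x = ∑ i ∈ T, b i ↔ x ∈ activeFace f b S := by
    intro x hx
    rw [hl, Finset.sum_eq_sum_iff_of_le fun i _ => hx i]
    simp [T, activeFace, hx]
  refine ⟨LinearMap.toContinuousLinearMap l,
    ext fun x => ⟨fun hx => ?_, fun ⟨hx, hmax⟩ => ?_⟩⟩
  · refine ⟨hx.1, fun y hy => ?_⟩
    rw [LinearMap.coe_toContinuousLinearMap', (heq x hx.1).2 hx]
    exact hle y hy
  · refine (heq x hx).1 ((hle x hx).antisymm ?_)
    rw [← (heq w hw.1).2 hw]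
    exact hmax w hw.1

theorem activeFace_activeSet [Fintype ι] {A : Set V} (hA : IsExposed ℝ (polyhedron f b) A)
    (hne : A.Nonempty) : activeFace f b (activeSet f b A) = A := by
  classical
  have hAK : A ⊆ polyhedron f b := hA.subset
  obtain ⟨x₀, hx₀, hx₀lt⟩ : ∃ x₀ ∈ A, ∀ i ∈ Finset.univ.filter (· ∉ activeSet f b A),
      f i x₀ < b i := by
    refine (hA.convex (convex_polyhedron f b)).exists_forall_lt hne f b _
      (fun i _ x hx => hAK hx i) fun i hi => ?_
    simp only [activeSet, Finset.mem_filter, Finset.mem_univ, true_and, mem_ofPred_eq,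
      not_forall] at hi
    obtain ⟨x, hx, hxi⟩ := hi
    exact ⟨x, hx, (hAK hx i).lt_of_ne hxi⟩
  refine Subset.antisymm (fun y hy => ?_) fun x hx => ⟨hAK hx, fun i hi => hi x hx⟩
  -- `x₀` is a relative interior point of `A`, so we may step from `x₀` away from `y` within the
  -- polyhedron; as `x₀` maximizes the exposing functional `l`, this forces `l x₀ ≤ l y`.
  obtain ⟨t, ht, hmem⟩ := exists_pos_add_smul_mem_polyhedron f b (v := x₀ - y) (hAK hx₀)
    fun i hi => by
      have hiA : i ∈ activeSet f b A := by
        by_contra h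
        exact (hx₀lt i (by simpa using h)).ne hi
      simp [hy.2 i hiA, hi]
  obtain ⟨l, rfl⟩ := hA hne
  have hstep : l (x₀ + t • (x₀ - y)) ≤ l x₀ := hx₀.2 _ hmem
  have hy_max : l x₀ ≤ l y := by
    simp only [map_add, map_smul, map_sub, smul_eq_mul] at hstep
    nlinarith
  exact ⟨hy.1, fun z hz => (hx₀.2 z hz).trans hy_max⟩

end Polyhedron

section FaceTransfer

variable {V W : Type*} [NormedAddCommGroup V] [NormedSpace ℝ V]
  [NormedAddCommGroup W] [NormedSpace ℝ W] [FiniteDimensional ℝ W] {ι : Type*} [Fintype ι]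
  {f : ι → V →ₗ[ℝ] ℝ} {b : ι → ℝ}

/-- The empty face is sent to `∅` by hand: `activeSet f b ∅ = univ`, whose active face in
`polyhedron f' b'` need not be empty. -/
def transferFace (f' : ι → W →ₗ[ℝ] ℝ) (b' : ι → ℝ) (A : facePoset (polyhedron f b)) :
    facePoset (polyhedron f' b') :=
  ⟨{x ∈ activeFace f' b' (activeSet f b A.1) | A.1.Nonempty}, by
    by_cases hA : A.1.Nonempty
    · simpa [hA] using isExposed_activeFace f' b' (activeSet f b A.1)
    · simpa [hA] using isExposed_empty⟩

variable {f' : ι → W →ₗ[ℝ] ℝ} {b' : ι → ℝ}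

theorem transferFace_mono : Monotone (transferFace (f := f) (b := b) f' b') :=
  fun _ _ hAB _ ⟨hx, hA⟩ => ⟨activeFace_anti f' b' (activeSet_anti f b hAB) hx, hA.mono hAB⟩

theorem transferFace_transferFace [FiniteDimensional ℝ V]
    (hne : ∀ S, (activeFace f b S).Nonempty ↔ (activeFace f' b' S).Nonempty)
    (hact : ∀ S, (activeFace f b S).Nonempty →
      activeSet f b (activeFace f b S) = activeSet f' b' (activeFace f' b' S))
    (A : facePoset (polyhedron f b)) : transferFace f b (transferFace f' b' A) = A := by
  apply Subtype.ext
  by_cases hA : A.1.Nonempty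
  · have hface : activeFace f b (activeSet f b A.1) = A.1 := activeFace_activeSet f b A.2 hA
    have hB : (activeFace f' b' (activeSet f b A.1)).Nonempty := (hne _).1 (by rwa [hface])
    simp only [transferFace, hA, hB, and_true, ofPred_mem_eq]
    rw [← hact _ (by rwa [hface]), hface, hface]
  · simp [transferFace, not_nonempty_iff_eq_empty.1 hA]

theorem nonempty_orderIso_facePoset_polyhedron [FiniteDimensional ℝ V]
    (hne : ∀ S, (activeFace f b S).Nonempty ↔ (activeFace f' b' S).Nonempty)
    (hact : ∀ S, (activeFace f b S).Nonempty →
      activeSet f b (activeFace f b S) = activeSet f' b' (activeFace f' b' S)) :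
    Nonempty (facePoset (polyhedron f b) ≃o facePoset (polyhedron f' b')) :=
  ⟨Equiv.toOrderIso
    ⟨transferFace f' b', transferFace f b, transferFace_transferFace hne hact,
      transferFace_transferFace (fun S => (hne S).symm)
        fun S hS => (hact S ((hne S).2 hS)).symm⟩
    transferFace_mono transferFace_mono⟩

end FaceTransfer

section Slice

variable {V : Type*} [NormedAddCommGroup V] [NormedSpace ℝ V]

theorem exists_mem_openSegment_apply_eq (g : V →ₗ[ℝ] ℝ) {u v : V} {d : ℝ} (hu : g u < d)
    (hv : d < g v) : ∃ x ∈ openSegment ℝ u v, g x = d := by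
  have hpos : 0 < g v - g u := by linarith
  set t := (d - g u) / (g v - g u)
  have ht : t * (g v - g u) = d - g u := div_mul_cancel₀ _ hpos.ne'
  refine ⟨(1 - t) • u + t • v, ⟨1 - t, t, ?_, div_pos (by linarith) hpos, by ring, rfl⟩, ?_⟩
  · rw [sub_pos, div_lt_one hpos]
    linarith
  · simp only [map_add, map_smul, smul_eq_mul]
    linarith

theorem eq_of_mem_openSegment_of_apply_eq (φ : V →ₗ[ℝ] ℝ) {u v x : V} {c : ℝ} (hu : φ u ≤ c)
    (hv : φ v ≤ c) (hx : x ∈ openSegment ℝ u v) (hφx : φ x = c) : φ u = c := by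
  obtain ⟨s, t, hs, ht, hst, rfl⟩ := hx
  simp only [map_add, map_smul, smul_eq_mul] at hφx
  have hsum : s * (c - φ u) + t * (c - φ v) = 0 := by linear_combination c * hst - hφx
  by_contra hne
  linarith [mul_pos hs (sub_pos.2 (hu.lt_of_ne hne)), mul_nonneg ht.le (sub_nonneg.2 hv)]

variable {ι : Type*} (f : ι → V →ₗ[ℝ] ℝ) (b : ι → ℝ) {G : Set V} (hGc : Convex ℝ G)
  (hGK : G ⊆ polyhedron f b) (g : V →ₗ[ℝ] ℝ) {d : ℝ}
include hGc hGK

theorem Convex.activeSet_inter_hyperplane {u v : V} (hu : u ∈ G) (hv : v ∈ G) (hgu : g u < d)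
    (hgv : d < g v) : activeSet f b (G ∩ {x | g x = d}) = activeSet f b G := by
  refine (activeSet_anti f b inter_subset_left).antisymm' fun i hi x hx => ?_
  have hseg : ∀ y z, y ∈ G → z ∈ G → g y < d → d < g z → ∃ w ∈ openSegment ℝ y z,
      w ∈ G ∩ {x | g x = d} := fun y z hy hz hgy hgz =>
    (exists_mem_openSegment_apply_eq g hgy hgz).imp fun w ⟨hw, hgw⟩ =>
      ⟨hw, hGc.openSegment_subset hy hz hw, hgw⟩
  rcases lt_trichotomy (g x) d with hgx | hgx | hgx
  · obtain ⟨w, hw, hwG⟩ := hseg x v hx hv hgx hgv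
    exact eq_of_mem_openSegment_of_apply_eq (f i) (hGK hx i) (hGK hv i) hw (hi w hwG)
  · exact hi x ⟨hx, hgx⟩
  · obtain ⟨w, hw, hwG⟩ := hseg u x hu hx hgu hgx
    rw [openSegment_symm] at hw
    exact eq_of_mem_openSegment_of_apply_eq (f i) (hGK hx i) (hGK hu i) hw (hi w hwG)

theorem Convex.activeSet_inter_halfSpace {u : V} (hu : u ∈ G) (hgu : g u < d) :
    activeSet f b (G ∩ {x | g x ≤ d}) = activeSet f b G := by
  refine (activeSet_anti f b inter_subset_left).antisymm' fun i hi x hx => ?_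
  by_cases hgx : g x ≤ d
  · exact hi x ⟨hx, hgx⟩
  · have hsec := hGc.activeSet_inter_hyperplane f b hGK g hu hx hgu (not_le.1 hgx)
    have hiG : i ∈ activeSet f b G :=
      hsec ▸ activeSet_anti f b (inter_subset_inter_right G fun _ h => le_of_eq h) hi
    exact hiG x hx

end Slice

section CutsOff

variable {V : Type*} [NormedAddCommGroup V] [NormedSpace ℝ V]

def CutsOff (K : Set V) (p : V → Prop) (g : V →ₗ[ℝ] ℝ) (d : ℝ) : Prop :=
  ∀ w ∈ extremePoints ℝ K, (p w → d < g w) ∧ (¬ p w → g w < d)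

theorem IsCompact.exists_mem_extremePoints_isMaxOn {s : Set V} (hs : IsCompact s)
    (hne : s.Nonempty) (l : V →L[ℝ] ℝ) : ∃ w ∈ extremePoints ℝ s, IsMaxOn l s w := by
  obtain ⟨z, hz, hzmax⟩ := hs.exists_isMaxOn hne l.continuous.continuousOn
  have hexp : IsExposed ℝ s {y ∈ s | ∀ x ∈ s, l x ≤ l y} := fun _ => ⟨l, rfl⟩
  obtain ⟨w, hw⟩ := (hexp.isCompact hs).extremePoints_nonempty ⟨z, hz, isMaxOn_iff.1 hzmax⟩
  exact ⟨w, hexp.isExtreme.extremePoints_subset_extremePoints hw, isMaxOn_iff.2 hw.1.2⟩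

variable [FiniteDimensional ℝ V] {G : Set V} {p : V → Prop} {g : V →ₗ[ℝ] ℝ} {d : ℝ}

theorem CutsOff.inter_halfSpace_nonempty_iff (h : CutsOff G p g d) (hG : IsCompact G) :
    (G ∩ {x | g x ≤ d}).Nonempty ↔ ∃ w ∈ extremePoints ℝ G, ¬ p w := by
  refine ⟨fun ⟨x, hxG, hgx⟩ => ?_, fun ⟨w, hw, hpw⟩ =>
    ⟨w, extremePoints_subset hw, ((h w hw).2 hpw).le⟩⟩
  obtain ⟨w, hw, hmin⟩ :=
    hG.exists_mem_extremePoints_isMaxOn ⟨x, hxG⟩ (-LinearMap.toContinuousLinearMap g)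
  have hwx : g w ≤ g x := by simpa using isMaxOn_iff.1 hmin x hxG
  exact ⟨w, hw, fun hpw => ((h w hw).1 hpw).not_ge (hwx.trans hgx)⟩

theorem CutsOff.inter_hyperplane_nonempty_iff (h : CutsOff G p g d) (hG : IsCompact G)
    (hGc : Convex ℝ G) :
    (G ∩ {x | g x = d}).Nonempty ↔
      (∃ w ∈ extremePoints ℝ G, ¬ p w) ∧ ∃ w ∈ extremePoints ℝ G, p w := by
  constructor
  · rintro ⟨x, hxG, hgx⟩
    refine ⟨(h.inter_halfSpace_nonempty_iff hG).1 ⟨x, hxG, hgx.le⟩, ?_⟩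
    obtain ⟨w, hw, hmax⟩ :=
      hG.exists_mem_extremePoints_isMaxOn ⟨x, hxG⟩ (LinearMap.toContinuousLinearMap g)
    have hxw : g x ≤ g w := isMaxOn_iff.1 hmax x hxG
    exact ⟨w, hw, by_contra fun hpw => ((h w hw).2 hpw).not_ge (hgx ▸ hxw)⟩
  · rintro ⟨⟨u, hu, hpu⟩, ⟨v, hv, hpv⟩⟩
    obtain ⟨x, hx, hgx⟩ := exists_mem_openSegment_apply_eq g ((h u hu).2 hpu) ((h v hv).1 hpv)
    exact ⟨x, hGc.openSegment_subset (extremePoints_subset hu) (extremePoints_subset hv) hx, hgx⟩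

end CutsOff

section Truncation

variable {V : Type*} [NormedAddCommGroup V] [NormedSpace ℝ V] {ι : Type*}
  (f : ι → V →ₗ[ℝ] ℝ) (b : ι → ℝ) {g : V →ₗ[ℝ] ℝ} {d : ℝ} {S : Set (Option ι)}

theorem polyhedron_option_elim' :
    polyhedron (Option.elim' g f) (Option.elim' d b) = polyhedron f b ∩ {x | g x ≤ d} := by
  ext x
  simp [polyhedron, Option.forall, and_comm]

theorem activeFace_option_elim'_of_none_mem (hS : none ∈ S) :
    activeFace (Option.elim' g f) (Option.elim' d b) S =
      activeFace f b (some ⁻¹' S) ∩ {x | g x = d} := by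
  ext x
  simp only [activeFace, polyhedron, Option.forall, mem_inter_iff, mem_ofPred_eq, mem_preimage,
    Option.elim', hS, true_implies]
  constructor
  · rintro ⟨⟨-, hx⟩, hgx, hxS⟩
    exact ⟨⟨hx, hxS⟩, hgx⟩
  · rintro ⟨⟨hx, hxS⟩, hgx⟩
    exact ⟨⟨hgx.le, hx⟩, hgx, hxS⟩

theorem activeFace_option_elim'_of_none_notMem (hS : none ∉ S) :
    activeFace (Option.elim' g f) (Option.elim' d b) S =
      activeFace f b (some ⁻¹' S) ∩ {x | g x ≤ d} := by
  ext x
  simp only [activeFace, polyhedron, Option.forall, mem_inter_iff, mem_ofPred_eq, mem_preimage,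
    Option.elim', hS, false_implies, true_and]
  tauto

variable [FiniteDimensional ℝ V] [Fintype ι] {p : V → Prop}

theorem CutsOff.to_activeFace (h : CutsOff (polyhedron f b) p g d) (T : Set ι) :
    CutsOff (activeFace f b T) p g d := fun w hw =>
  h w ((isExposed_activeFace f b T).isExtreme.extremePoints_subset_extremePoints hw)

variable (hK : IsCompact (polyhedron f b)) (h : CutsOff (polyhedron f b) p g d)
include hK h

theorem CutsOff.activeFace_option_elim'_nonempty_iff :
    (activeFace (Option.elim' g f) (Option.elim' d b) S).Nonempty ↔
      (∃ w ∈ extremePoints ℝ (activeFace f b (some ⁻¹' S)), ¬ p w) ∧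
        (none ∈ S → ∃ w ∈ extremePoints ℝ (activeFace f b (some ⁻¹' S)), p w) := by
  have hG := isExposed_activeFace f b (some ⁻¹' S)
  by_cases hS : none ∈ S
  · rw [activeFace_option_elim'_of_none_mem f b hS,
      (h.to_activeFace f b _).inter_hyperplane_nonempty_iff (hG.isCompact hK)
        (hG.convex (convex_polyhedron f b))]
    simp [hS]
  · rw [activeFace_option_elim'_of_none_notMem f b hS,
      (h.to_activeFace f b _).inter_halfSpace_nonempty_iff (hG.isCompact hK)]
    simp [hS]

theorem CutsOff.activeSet_activeFace_option_elim'
    (hne : (activeFace (Option.elim' g f) (Option.elim' d b) S).Nonempty) :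
    activeSet (Option.elim' g f) (Option.elim' d b)
        (activeFace (Option.elim' g f) (Option.elim' d b) S) =
      {o | o.elim (none ∈ S) (· ∈ activeSet f b (activeFace f b (some ⁻¹' S)))} := by
  have hG := isExposed_activeFace f b (some ⁻¹' S)
  have hGc := hG.convex (convex_polyhedron f b)
  obtain ⟨⟨u, hu, hpu⟩, hv⟩ := (h.activeFace_option_elim'_nonempty_iff f b hK).1 hne
  have hgu : g u < d := (h.to_activeFace f b _ u hu).2 hpu
  ext (_ | i)
  · by_cases hS : none ∈ S
    · simp only [activeSet, activeFace_option_elim'_of_none_mem f b hS, mem_ofPred_eq,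
        Option.elim', Option.elim, hS, iff_true]
      exact fun x hx => hx.2
    · simp only [activeSet, activeFace_option_elim'_of_none_notMem f b hS, mem_ofPred_eq,
        Option.elim', Option.elim, hS, iff_false]
      exact fun hall => hgu.ne (hall u ⟨extremePoints_subset hu, hgu.le⟩)
  · by_cases hS : none ∈ S
    · obtain ⟨v, hv, hpv⟩ := hv hS
      rw [activeFace_option_elim'_of_none_mem f b hS]
      exact Set.ext_iff.1 (hGc.activeSet_inter_hyperplane f b hG.subset g
        (extremePoints_subset hu) (extremePoints_subset hv) hgu
        ((h.to_activeFace f b _ v hv).1 hpv)) i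
    · rw [activeFace_option_elim'_of_none_notMem f b hS]
      exact Set.ext_iff.1
        (hGc.activeSet_inter_halfSpace f b hG.subset g (extremePoints_subset hu) hgu) i

end Truncation

theorem CutsOff.nonempty_orderIso_facePoset_inter {V : Type*} [NormedAddCommGroup V]
    [NormedSpace ℝ V] [FiniteDimensional ℝ V] {ι : Type*} [Fintype ι] {f : ι → V →ₗ[ℝ] ℝ}
    {b : ι → ℝ} {K : Set V} (hK : K = polyhedron f b) (hKc : IsCompact K) {p : V → Prop}
    {g₁ g₂ : V →ₗ[ℝ] ℝ} {d₁ d₂ : ℝ} (h₁ : CutsOff K p g₁ d₁) (h₂ : CutsOff K p g₂ d₂) :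
    Nonempty (facePoset (K ∩ {x | g₁ x ≤ d₁}) ≃o facePoset (K ∩ {x | g₂ x ≤ d₂})) := by
  subst hK
  have hne : ∀ S, (activeFace (Option.elim' g₁ f) (Option.elim' d₁ b) S).Nonempty ↔
      (activeFace (Option.elim' g₂ f) (Option.elim' d₂ b) S).Nonempty := fun S => by
    rw [h₁.activeFace_option_elim'_nonempty_iff f b hKc,
      h₂.activeFace_option_elim'_nonempty_iff f b hKc]
  rw [← polyhedron_option_elim', ← polyhedron_option_elim']
  refine nonempty_orderIso_facePoset_polyhedron hne fun S hS => ?_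
  rw [h₁.activeSet_activeFace_option_elim' f b hKc hS,
    h₂.activeSet_activeFace_option_elim' f b hKc ((hne S).1 hS)]

section Product

variable {V W : Type*} [NormedAddCommGroup V] [NormedSpace ℝ V] [NormedAddCommGroup W]
  [NormedSpace ℝ W]

theorem prod_eq_polyhedron {ι κ : Type*} {P : Set V} {Q : Set W} {f : ι → V →ₗ[ℝ] ℝ}
    {b : ι → ℝ} {f' : κ → W →ₗ[ℝ] ℝ} {b' : κ → ℝ} (hP : P = polyhedron f b)
    (hQ : Q = polyhedron f' b') :
    P ×ˢ Q = polyhedron (Sum.elim (fun i => (f i).comp (LinearMap.fst ℝ V W))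
      fun j => (f' j).comp (LinearMap.snd ℝ V W)) (Sum.elim b b') := by
  subst hP hQ
  ext z
  simp [polyhedron, Sum.forall]

variable {p : V → Prop} {g : V →ₗ[ℝ] ℝ} {q : W → Prop} {g' : W →ₗ[ℝ] ℝ} {d : ℝ}

theorem CutsOff.prod_left {P : Set V} (h : CutsOff P p g d) (Q : Set W) :
    CutsOff (P ×ˢ Q) (fun z => p z.1) (g.comp (LinearMap.fst ℝ V W)) d := fun z hz => by
  rw [extremePoints_prod] at hz
  exact h z.1 hz.1

theorem CutsOff.prod_right {Q : Set W} (h : CutsOff Q q g' d) (P : Set V) :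
    CutsOff (P ×ˢ Q) (fun z => q z.2) (g'.comp (LinearMap.snd ℝ V W)) d := fun z hz => by
  rw [extremePoints_prod] at hz
  exact h z.2 hz.2

end Product

theorem truncation_commutes_with_products_general
    {d₁ d₂ : ℕ} {ιP ιQ : Type*} [Fintype ιP] [Fintype ιQ]
    (fP : ιP → (Fin d₁ → ℝ) →ₗ[ℝ] ℝ) (bP : ιP → ℝ)
    (fQ : ιQ → (Fin d₂ → ℝ) →ₗ[ℝ] ℝ) (bQ : ιQ → ℝ)
    (P : Set (Fin d₁ → ℝ)) (Q : Set (Fin d₂ → ℝ))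
    (hP : P = {x | ∀ i, fP i x ≤ bP i}) (hQ : Q = {y | ∀ i, fQ i y ≤ bQ i})
    (hPcpt : IsCompact P) (hQcpt : IsCompact Q) :
    (∀ (E : Set (Fin d₁ → ℝ)), IsExposed ℝ P E → E.Nonempty → E ≠ P →
      ∀ (f : (Fin d₁ → ℝ) →ₗ[ℝ] ℝ) (c : ℝ),
        (∀ x ∈ Set.extremePoints ℝ P, (x ∈ E → c < f x) ∧ (x ∉ E → f x < c)) →
      ∀ (g : ((Fin d₁ → ℝ) × (Fin d₂ → ℝ)) →ₗ[ℝ] ℝ) (d : ℝ),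
        (∀ z ∈ Set.extremePoints ℝ (P ×ˢ Q),
          (z.1 ∈ E → d < g z) ∧ (z.1 ∉ E → g z < d)) →
      Nonempty (facePoset ((P ∩ {x | f x ≤ c}) ×ˢ Q) ≃o
                facePoset ((P ×ˢ Q) ∩ {z | g z ≤ d}))) ∧
    (∀ (F : Set (Fin d₂ → ℝ)), IsExposed ℝ Q F → F.Nonempty → F ≠ Q →
      ∀ (f : (Fin d₂ → ℝ) →ₗ[ℝ] ℝ) (c : ℝ),
        (∀ y ∈ Set.extremePoints ℝ Q, (y ∈ F → c < f y) ∧ (y ∉ F → f y < c)) →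
      ∀ (g : ((Fin d₁ → ℝ) × (Fin d₂ → ℝ)) →ₗ[ℝ] ℝ) (d : ℝ),
        (∀ z ∈ Set.extremePoints ℝ (P ×ˢ Q),
          (z.2 ∈ F → d < g z) ∧ (z.2 ∉ F → g z < d)) →
      Nonempty (facePoset (P ×ˢ (Q ∩ {y | f y ≤ c})) ≃o
                facePoset ((P ×ˢ Q) ∩ {z | g z ≤ d}))) := by
  have hK : P ×ˢ Q = _ := prod_eq_polyhedron (f := fP) (f' := fQ) hP hQ
  have hKc : IsCompact (P ×ˢ Q) := hPcpt.prod hQcpt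
  refine ⟨fun E _ _ _ f c hf g d hg => ?_, fun F _ _ _ f c hf g d hg => ?_⟩
  · have hcut : CutsOff P (· ∈ E) f c := hf
    rw [show (P ∩ {x | f x ≤ c}) ×ˢ Q = P ×ˢ Q ∩ {z | f.comp (LinearMap.fst ℝ _ _) z ≤ c} by
      ext; simp [and_right_comm]]
    exact (hcut.prod_left Q).nonempty_orderIso_facePoset_inter hK hKc hg
  · have hcut : CutsOff Q (· ∈ F) f c := hf
    rw [show P ×ˢ (Q ∩ {y | f y ≤ c}) = P ×ˢ Q ∩ {z | f.comp (LinearMap.snd ℝ _ _) z ≤ c} by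
      ext; simp [and_assoc]]
    exact (hcut.prod_right P).nonempty_orderIso_facePoset_inter hK hKc hg

/-- Face truncation commutes with products: for simple polytopes `P` and `Q` and a
proper nonempty face `E` of `P`, the polytope `Π_E(P) × Q` is combinatorially
equivalent to `Π_{E×Q}(P × Q)`, where each truncation is performed by a halfspace
whose bounding hyperplane strictly separates the vertices of the truncated face
from the remaining vertices; and symmetrically `P × Π_F(Q)` is combinatorially
equivalent to `Π_{P×F}(P × Q)` for a face `F` of `Q`. -/
theorem truncation_commutes_with_products
    {d₁ d₂ : ℕ} {ιP ιQ : Type*} [Fintype ιP] [Fintype ιQ]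
    (fP : ιP → (Fin d₁ → ℝ) →ₗ[ℝ] ℝ) (bP : ιP → ℝ)
    (fQ : ιQ → (Fin d₂ → ℝ) →ₗ[ℝ] ℝ) (bQ : ιQ → ℝ)
    (P : Set (Fin d₁ → ℝ)) (Q : Set (Fin d₂ → ℝ))
    (hP : P = {x | ∀ i, fP i x ≤ bP i}) (hQ : Q = {y | ∀ i, fQ i y ≤ bQ i})
    (hPcpt : IsCompact P) (hQcpt : IsCompact Q)
    (hPsimple : ∀ x ∈ P,
      LinearIndependent ℝ (fun i : {i : ιP // fP i x = bP i} => fP i.1))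
    (hQsimple : ∀ y ∈ Q,
      LinearIndependent ℝ (fun i : {i : ιQ // fQ i y = bQ i} => fQ i.1)) :
    (∀ (E : Set (Fin d₁ → ℝ)), IsExposed ℝ P E → E.Nonempty → E ≠ P →
      ∀ (f : (Fin d₁ → ℝ) →ₗ[ℝ] ℝ) (c : ℝ),
        (∀ x ∈ Set.extremePoints ℝ P, (x ∈ E → c < f x) ∧ (x ∉ E → f x < c)) →
      ∀ (g : ((Fin d₁ → ℝ) × (Fin d₂ → ℝ)) →ₗ[ℝ] ℝ) (d : ℝ),
        (∀ z ∈ Set.extremePoints ℝ (P ×ˢ Q),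
          (z.1 ∈ E → d < g z) ∧ (z.1 ∉ E → g z < d)) →
      Nonempty (facePoset ((P ∩ {x | f x ≤ c}) ×ˢ Q) ≃o
                facePoset ((P ×ˢ Q) ∩ {z | g z ≤ d}))) ∧
    (∀ (F : Set (Fin d₂ → ℝ)), IsExposed ℝ Q F → F.Nonempty → F ≠ Q →
      ∀ (f : (Fin d₂ → ℝ) →ₗ[ℝ] ℝ) (c : ℝ),
        (∀ y ∈ Set.extremePoints ℝ Q, (y ∈ F → c < f y) ∧ (y ∉ F → f y < c)) →
      ∀ (g : ((Fin d₁ → ℝ) × (Fin d₂ → ℝ)) →ₗ[ℝ] ℝ) (d : ℝ),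
        (∀ z ∈ Set.extremePoints ℝ (P ×ˢ Q),
          (z.2 ∈ F → d < g z) ∧ (z.2 ∉ F → g z < d)) →
      Nonempty (facePoset (P ×ˢ (Q ∩ {y | f y ≤ c})) ≃o
                facePoset ((P ×ˢ Q) ∩ {z | g z ≤ d}))) :=
  truncation_commutes_with_products_general fP bP fQ bQ P Q hP hQ hPcpt hQcpt
end
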